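/- Let n ≥ 1 and d ≥ 1 be integers and let x_1, …, x_n ∈ ℝ^d. Every eigenvalue λ of the gradient-enhanced Gaussian kernel matrix K̃∇ built from x_1,…,x_n satisfies λ ≤ 1 + u_G(n,d), where u_G(n,d) = (n−1)·((1+√(1+4d))/2)·exp(−(1+2d−√(1+4d))/(4d)). -/

import Mathlib

/-!
By Gershgorin's theorem every eigenvalue lies within the off-diagonal absolute row sum of the
diagonal entry `1`. Inside the block of the point `x_a` itself the off-diagonal entries vanish;
for each of the other `n - 1` points `x_i`, writing `δ = x_a - x_i`, the row restricted to the
`d + 1` columns of `x_i` has absolute sum `(1 + ∑ |δ_j|) e^{-|δ|²/2}` (value row) or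
`(|δ_p| + |1 - δ_p²| + |δ_p| ∑_{j ≠ p} |δ_j|) e^{-|δ|²/2}` (derivative row). Cauchy–Schwarz,
`∑ |δ_j| ≤ √d |δ|`, reduces both to the one-variable function `(1 + √d r) e^{-r²/2}`, whose
maximum is the constant `u_G(n,d) / (n - 1)`.
-/

open scoped BigOperators

/-- The gradient-enhanced Gaussian kernel matrix (with unit hyperparameters) built
from points `x_1, …, x_n ∈ ℝ^d`.  It is indexed by pairs `(p, a)` where `p = none`
is the function-value block and `p = some j` is the block of derivatives in the
`j`-th coordinate. -/
noncomputable def Kgrad {n d : ℕ} (x : Fin n → Fin d → ℝ) :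
    Matrix (Option (Fin d) × Fin n) (Option (Fin d) × Fin n) ℝ :=
  fun pa qi =>
    let a := pa.2
    let i := qi.2
    let k : ℝ := Real.exp (-(∑ l, (x a l - x i l) ^ 2) / 2)
    match pa.1, qi.1 with
    | none, none => k
    | none, some j => (x a j - x i j) * k
    | some p, none => -(x a p - x i p) * k
    | some p, some j =>
        ((if p = j then (1 : ℝ) else 0) - (x a p - x i p) * (x a j - x i j)) * k

/-- Upper bound `u_G(n,d)`. -/
noncomputable def uG (n d : ℕ) : ℝ :=
  ((n : ℝ) - 1) * ((1 + Real.sqrt (1 + 4 * (d : ℝ))) / 2) *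
    Real.exp (-(1 + 2 * (d : ℝ) - Real.sqrt (1 + 4 * (d : ℝ))) / (4 * (d : ℝ)))

open Real Finset

-- The maximum of `r ↦ (1 + √d r) e^{-r²/2}`, attained at `r₀ = (√(1 + 4d) - 1) / (2√d)`.
noncomputable def gaussBlockBound (d : ℝ) : ℝ :=
  ((1 + √(1 + 4 * d)) / 2) * exp (-(1 + 2 * d - √(1 + 4 * d)) / (4 * d))

lemma uG_eq_mul_gaussBlockBound (n d : ℕ) : uG n d = ((n : ℝ) - 1) * gaussBlockBound d := by
  rw [uG, gaussBlockBound, mul_assoc]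

lemma one_add_sqrt_mul_mul_exp_le_gaussBlockBound {d : ℝ} (hd : 0 < d) (r : ℝ) :
    (1 + √d * r) * exp (-(r ^ 2) / 2) ≤ gaussBlockBound d := by
  set s := √d
  set m := √(1 + 4 * d)
  have hs : s ^ 2 = d := sq_sqrt hd.le
  have hs0 : 0 < s := sqrt_pos.2 hd
  have hm : m ^ 2 = 1 + 4 * d := sq_sqrt (by linarith)
  have hm0 : 0 ≤ m := sqrt_nonneg _
  set r₀ := (m - 1) / (2 * s)
  have hr₀ : 2 * s * r₀ = m - 1 := by simp only [r₀]; field_simp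
  have hmr₀ : (1 + m) * r₀ = 2 * s := by
    refine mul_left_cancel₀ (by positivity : 2 * s ≠ 0) ?_
    linear_combination (1 + m) * hr₀ + hm - 4 * hs
  have hexp_r₀ : -(1 + 2 * d - m) / (4 * d) = -(r₀ ^ 2) / 2 := by
    rw [div_eq_div_iff (by positivity) two_ne_zero]
    linear_combination (2 * s * r₀ + m - 1) * hr₀ + hm - 4 * r₀ ^ 2 * hs
  -- `1 + u ≤ e^u` at `u = (r² - r₀²) / 2`; the remaining gap is a square in `r - r₀`
  have htangent : 1 + s * r ≤ (1 + m) / 2 * exp ((r ^ 2 - r₀ ^ 2) / 2) := by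
    have hsq : (1 + m) / 2 * (1 + (r ^ 2 - r₀ ^ 2) / 2) - (1 + s * r)
        = (1 + m) / 4 * (r - r₀) ^ 2 := by
      linear_combination (r / 2 - r₀ / 2) * hmr₀ - (1 / 2) * hr₀
    calc 1 + s * r ≤ (1 + m) / 2 * (1 + (r ^ 2 - r₀ ^ 2) / 2) := by
          nlinarith [sq_nonneg (r - r₀)]
      _ ≤ (1 + m) / 2 * exp ((r ^ 2 - r₀ ^ 2) / 2) := by
          gcongr; linarith [add_one_le_exp ((r ^ 2 - r₀ ^ 2) / 2)]
  calc (1 + s * r) * exp (-(r ^ 2) / 2)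
      ≤ (1 + m) / 2 * exp ((r ^ 2 - r₀ ^ 2) / 2) * exp (-(r ^ 2) / 2) := by gcongr
    _ = (1 + m) / 2 * exp (-(r₀ ^ 2) / 2) := by rw [mul_assoc, ← exp_add]; ring_nf
    _ = gaussBlockBound d := by rw [gaussBlockBound, hexp_r₀]

lemma sum_abs_le_sqrt_card_mul_sqrt_sum_sq {ι : Type*} (s : Finset ι) (f : ι → ℝ) :
    ∑ j ∈ s, |f j| ≤ √(#s) * √(∑ j ∈ s, f j ^ 2) := by
  rw [← sqrt_mul (by positivity)]
  apply le_sqrt_of_sq_le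
  simpa using sq_sum_le_card_mul_sum_sq (s := s) (f := fun j => |f j|)

lemma sq_add_sub_one_le_exp (t : ℝ) : t ^ 2 + t - 1 ≤ exp (t ^ 2 / 2) := by
  have h := sum_le_exp_of_nonneg (x := t ^ 2 / 2) (by positivity) 4
  norm_num [sum_range_succ, Nat.factorial] at h
  nlinarith [sq_nonneg (t - 1), sq_nonneg (t ^ 2 - 2), sq_nonneg (t ^ 2 - t)]

lemma le_exp_sq_div_two (t : ℝ) : t ≤ exp (t ^ 2 / 2) := by
  nlinarith [add_one_le_exp (t ^ 2 / 2), sq_nonneg (t - 1)]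

lemma mul_one_sub_add_le_sqrt_mul_sqrt {d t w : ℝ} (hd : 1 ≤ d) (ht₀ : 0 ≤ t) (ht₁ : t ≤ 1) :
    t * (1 - t) + √(d - 1) * t * w ≤ √d * √(t ^ 2 + w ^ 2) := by
  set b := √(d - 1)
  have hb : b ^ 2 = d - 1 := sq_sqrt (by linarith)
  rw [← sqrt_mul (by linarith)]
  apply le_sqrt_of_sq_le
  calc (t * (1 - t) + b * t * w) ^ 2 ≤ ((1 - t) ^ 2 + b ^ 2 * t ^ 2) * (t ^ 2 + w ^ 2) := by
        nlinarith [sq_nonneg ((1 - t) * w - b * t * t)]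
    _ ≤ d * (t ^ 2 + w ^ 2) := by
        gcongr
        nlinarith [mul_nonneg (sub_nonneg.2 hd) (by nlinarith : (0:ℝ) ≤ 1 - t ^ 2)]

lemma sq_add_sub_one_add_le_mul_exp {d t w : ℝ} (ht : 0 ≤ t) (hw : 0 ≤ w) :
    t ^ 2 + t - 1 + √(d - 1) * t * w ≤ (1 + √d * w) * exp (t ^ 2 / 2) := by
  have hb : √(d - 1) * t ≤ √d * exp (t ^ 2 / 2) :=
    mul_le_mul (sqrt_le_sqrt (by linarith)) (le_exp_sq_div_two t) ht (sqrt_nonneg _)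
  nlinarith [mul_le_mul_of_nonneg_right hb hw, sq_add_sub_one_le_exp t]

/- For `t ≤ 1` the derivative row is dominated by the value-row profile at radius
`√(t² + w²)`; for `t ≥ 1` the factor `e^{-t²/2}` absorbs everything that depends on `t`. -/
lemma add_abs_one_sub_sq_add_mul_exp_le_gaussBlockBound {d t w : ℝ} (hd : 1 ≤ d) (ht : 0 ≤ t)
    (hw : 0 ≤ w) :
    (t + |1 - t ^ 2| + √(d - 1) * t * w) * exp (-(t ^ 2 + w ^ 2) / 2) ≤ gaussBlockBound d := by
  rcases le_total t 1 with ht₁ | ht₁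
  · have hr : √(t ^ 2 + w ^ 2) ^ 2 = t ^ 2 + w ^ 2 := sq_sqrt (by positivity)
    calc _ ≤ (1 + √d * √(t ^ 2 + w ^ 2)) * exp (-(√(t ^ 2 + w ^ 2) ^ 2) / 2) := by
          rw [hr, abs_of_nonneg (by nlinarith)]
          refine mul_le_mul_of_nonneg_right ?_ (exp_pos _).le
          linarith [mul_one_sub_add_le_sqrt_mul_sqrt (w := w) hd ht ht₁]
      _ ≤ _ := one_add_sqrt_mul_mul_exp_le_gaussBlockBound (by linarith) _
  · calc _ ≤ (1 + √d * w) * exp (t ^ 2 / 2) * exp (-(t ^ 2 + w ^ 2) / 2) := by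
          rw [abs_of_nonpos (by nlinarith)]
          refine mul_le_mul_of_nonneg_right ?_ (exp_pos _).le
          linarith [sq_add_sub_one_add_le_mul_exp (d := d) ht hw]
      _ = (1 + √d * w) * exp (-(w ^ 2) / 2) := by rw [mul_assoc, ← exp_add]; ring_nf
      _ ≤ _ := one_add_sqrt_mul_mul_exp_le_gaussBlockBound (by linarith) w

lemma value_row_le_gaussBlockBound {d : ℕ} (hd : 0 < d) (δ : Fin d → ℝ) :
    (1 + ∑ j, |δ j|) * exp (-(∑ l, δ l ^ 2) / 2) ≤ gaussBlockBound d := by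
  have hr : √(∑ l, δ l ^ 2) ^ 2 = ∑ l, δ l ^ 2 := sq_sqrt (by positivity)
  have hl1 : ∑ j, |δ j| ≤ √d * √(∑ l, δ l ^ 2) := by
    simpa using sum_abs_le_sqrt_card_mul_sqrt_sum_sq univ δ
  calc _ ≤ (1 + √d * √(∑ l, δ l ^ 2)) * exp (-(√(∑ l, δ l ^ 2) ^ 2) / 2) := by
        rw [hr]; gcongr
    _ ≤ _ := one_add_sqrt_mul_mul_exp_le_gaussBlockBound (by exact_mod_cast hd) _

lemma grad_row_le_gaussBlockBound {d : ℕ} (δ : Fin d → ℝ) (p : Fin d) :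
    (|δ p| + ∑ j, |(if p = j then 1 else 0) - δ p * δ j|) * exp (-(∑ l, δ l ^ 2) / 2)
      ≤ gaussBlockBound d := by
  set t := |δ p|
  set w := √(∑ j ∈ univ.erase p, δ j ^ 2)
  have hd : (1 : ℝ) ≤ d := by exact_mod_cast p.pos
  have hsq : ∑ l, δ l ^ 2 = t ^ 2 + w ^ 2 := by
    rw [sq_abs, sq_sqrt (by positivity)]
    exact (add_sum_erase _ (fun l => δ l ^ 2) (mem_univ p)).symm
  have hrow : ∑ j, |(if p = j then 1 else 0) - δ p * δ j|
      = |1 - t ^ 2| + t * ∑ j ∈ univ.erase p, |δ j| := by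
    rw [← add_sum_erase _ _ (mem_univ p), mul_sum, if_pos rfl, ← sq, ← sq_abs]
    congr 1
    refine sum_congr rfl fun j hj => ?_
    rw [if_neg (ne_of_mem_erase hj).symm, zero_sub, abs_neg, abs_mul]
  have hl1 : ∑ j ∈ univ.erase p, |δ j| ≤ √(d - 1) * w := by
    have h := sum_abs_le_sqrt_card_mul_sqrt_sum_sq (univ.erase p) δ
    rwa [card_erase_of_mem (mem_univ p), card_univ, Fintype.card_fin, Nat.cast_pred p.pos] at h
  calc _ ≤ (t + |1 - t ^ 2| + √(d - 1) * t * w) * exp (-(t ^ 2 + w ^ 2) / 2) := by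
        rw [hrow, hsq]
        refine mul_le_mul_of_nonneg_right ?_ (exp_pos _).le
        nlinarith [mul_le_mul_of_nonneg_left hl1 (abs_nonneg (δ p))]
    _ ≤ _ := add_abs_one_sub_sq_add_mul_exp_le_gaussBlockBound hd (abs_nonneg _) (sqrt_nonneg _)

section Kgrad

variable {n d : ℕ} (x : Fin n → Fin d → ℝ)

lemma Kgrad_apply_self (k : Option (Fin d) × Fin n) : Kgrad x k k = 1 := by
  obtain ⟨_ | p, a⟩ := k <;> simp [Kgrad]

lemma Kgrad_apply_of_ne {p q : Option (Fin d)} (h : q ≠ p) (a : Fin n) :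
    Kgrad x (p, a) (q, a) = 0 := by
  rcases p with _ | p <;> rcases q with _ | q
  · exact absurd rfl h
  all_goals simp_all [Kgrad, eq_comm]

lemma sum_abs_Kgrad_block_le (hd : 0 < d) (k : Option (Fin d) × Fin n) (i : Fin n) :
    ∑ q, |Kgrad x k (q, i)| ≤ gaussBlockBound d := by
  obtain ⟨_ | p, a⟩ := k
  · convert value_row_le_gaussBlockBound hd (fun l => x a l - x i l) using 1
    simp [Fintype.sum_option, Kgrad, abs_mul, add_mul, sum_mul]
  · convert grad_row_le_gaussBlockBound (fun l => x a l - x i l) p using 1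
    simp [Fintype.sum_option, Kgrad, abs_mul, add_mul, sum_mul, abs_sub_comm (x i p)]

lemma sum_abs_Kgrad_offDiag_le (hd : 0 < d) (k : Option (Fin d) × Fin n) :
    ∑ j ∈ univ.erase k, |Kgrad x k j| ≤ ((n : ℝ) - 1) * gaussBlockBound d := by
  obtain ⟨p, a⟩ := k
  have hsame : ∑ q, |Kgrad x (p, a) (q, a)| = 1 := by
    rw [sum_eq_single p (fun q _ hq => by rw [Kgrad_apply_of_ne x hq, abs_zero])
      (fun h => absurd (mem_univ p) h), Kgrad_apply_self, abs_one]
  calc ∑ j ∈ univ.erase (p, a), |Kgrad x (p, a) j|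
      = ∑ i ∈ univ.erase a, ∑ q, |Kgrad x (p, a) (q, i)| := by
        rw [sum_erase_eq_sub (mem_univ _), ← univ_product_univ, sum_product_right,
          ← add_sum_erase _ _ (mem_univ a), hsame, Kgrad_apply_self, abs_one, add_sub_cancel_left]
    _ ≤ ∑ i ∈ univ.erase a, gaussBlockBound d :=
        sum_le_sum fun i _ => sum_abs_Kgrad_block_le x hd (p, a) i
    _ = ((n : ℝ) - 1) * gaussBlockBound d := by
        rw [sum_const, card_erase_of_mem (mem_univ a), card_univ, Fintype.card_fin,
          nsmul_eq_mul, Nat.cast_pred a.pos]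

end Kgrad

theorem stmt_17_general {n d : ℕ} (hd : 1 ≤ d)
    (x : Fin n → Fin d → ℝ) (lam : ℝ) (hlam : lam ∈ spectrum ℝ (Kgrad x)) :
    lam ≤ 1 + uG n d := by
  rw [← Matrix.spectrum_toLin', ← Module.End.hasEigenvalue_iff_mem_spectrum] at hlam
  obtain ⟨k, hk⟩ := eigenvalue_mem_ball hlam
  rw [Kgrad_apply_self, Metric.mem_closedBall, Real.dist_eq] at hk
  simp only [Real.norm_eq_abs] at hk
  rw [uG_eq_mul_gaussBlockBound]
  linarith [le_abs_self (lam - 1), sum_abs_Kgrad_offDiag_le x hd k]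

/-- Every eigenvalue `λ` of the gradient-enhanced Gaussian kernel matrix `K̃∇`
satisfies `λ ≤ 1 + u_G(n,d)`. -/
theorem stmt_17 {n d : ℕ} (hn : 1 ≤ n) (hd : 1 ≤ d)
    (x : Fin n → Fin d → ℝ) (lam : ℝ) (hlam : lam ∈ spectrum ℝ (Kgrad x)) :
    lam ≤ 1 + uG n d :=
  stmt_17_general hd x lam hlam
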